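/- arXiv:0907.0361 — 4 statements merged into one kernel-verified Lean document; each statement's English description precedes it below -/
import Mathlib

section
/- With notation as in the definition of intersection multiplicity: let A, B, C be homogeneous in K[x,y,z] with gcd(A, BC) = 1, P a point of K̄P², V ∈ {x, y, z} a coordinate with V(P) ≠ 0, n = deg B, and b = B/Vⁿ ∈ R_P. Then the K̄-linear map ψ : R_P/(A,C)_P → R_P/(A,BC)_P induced by multiplication by b is injective. -/
open MvPolynomial

noncomputable section BezoutDefs

set_option maxHeartbeats 1000000
set_option synthInstance.maxHeartbeats 200000

/-- The field of fractions of `F[x,y,z]`. -/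
abbrev FracF (F : Type) [Field F] := FractionRing (MvPolynomial (Fin 3) F)

/-- The canonical map `F[x,y,z] → F(x,y,z)`. -/
abbrev toFrac (F : Type) [Field F] : MvPolynomial (Fin 3) F →+* FracF F :=
  algebraMap (MvPolynomial (Fin 3) F) (FracF F)

/-- The local ring of degree-0 rational functions at a point `p`:
quotients `S/T` of homogeneous polynomials of equal degree with `T(p) ≠ 0`. -/
def Rloc (F : Type) [Field F] (p : Fin 3 → F) :
    Subalgebra F (FracF F) where
  carrier := {q | ∃ (S T : MvPolynomial (Fin 3) F) (d : ℕ),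
      S.IsHomogeneous d ∧ T.IsHomogeneous d ∧ eval p T ≠ 0 ∧
      q * toFrac F T = toFrac F S}
  mul_mem' := by
    rintro q1 q2 ⟨S1, T1, d1, hS1, hT1, hTp1, h1⟩ ⟨S2, T2, d2, hS2, hT2, hTp2, h2⟩
    refine ⟨S1 * S2, T1 * T2, d1 + d2, hS1.mul hS2, hT1.mul hT2, by simp [hTp1, hTp2], ?_⟩
    rw [map_mul, map_mul]
    linear_combination (q2 * toFrac F T2) * h1 + (toFrac F S1) * h2
  one_mem' := ⟨1, 1, 0, isHomogeneous_one _ _, isHomogeneous_one _ _, by simp, by simp⟩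
  add_mem' := by
    rintro q1 q2 ⟨S1, T1, d1, hS1, hT1, hTp1, h1⟩ ⟨S2, T2, d2, hS2, hT2, hTp2, h2⟩
    refine ⟨S1 * T2 + S2 * T1, T1 * T2, d1 + d2,
      (hS1.mul hT2).add (by simpa [Nat.add_comm] using hS2.mul hT1),
      hT1.mul hT2, by simp [hTp1, hTp2], ?_⟩
    rw [map_add, map_mul, map_mul, map_mul]
    linear_combination (toFrac F T2) * h1 + (toFrac F T1) * h2
  zero_mem' := ⟨0, 1, 0, isHomogeneous_zero _ _ _, isHomogeneous_one _ _, by simp, by simp⟩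
  algebraMap_mem' := by
    intro r
    refine ⟨C r, 1, 0, isHomogeneous_C _ _, isHomogeneous_one _ _, by simp, ?_⟩
    simp [IsScalarTower.algebraMap_apply F (MvPolynomial (Fin 3) F) (FracF F)]

/-- The ideal of `Rloc F p` generated by the curves `A` and `B`. -/
def interIdeal (F : Type) [Field F] (p : Fin 3 → F) (A B : MvPolynomial (Fin 3) F) :
    Ideal (Rloc F p) :=
  Ideal.span {q : Rloc F p | ∃ (M N T : MvPolynomial (Fin 3) F) (d : ℕ),
    (M * A + N * B).IsHomogeneous d ∧ T.IsHomogeneous d ∧ eval p T ≠ 0 ∧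
    q.1 * toFrac F T = toFrac F (M * A + N * B)}

/-- Intersection multiplicity of the curves `A` and `B` at the point `p`. -/
def interMult (F : Type) [Field F] (p : Fin 3 → F) (A B : MvPolynomial (Fin 3) F) : ℕ :=
  Module.finrank F ((Rloc F p) ⧸ (interIdeal F p A B))

end BezoutDefs

open MvPolynomial


set_option maxHeartbeats 1000000
set_option synthInstance.maxHeartbeats 400000

noncomputable section DescentAux

variable {K L : Type} [Field K] [Field L] [Algebra K L] {σ : Type}

/-- coefficientwise application of a `K`-linear functional. -/
def phiAux (f : L →ₗ[K] K) (F : MvPolynomial σ L) : MvPolynomial σ K :=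
  ∑ m ∈ F.support, monomial m (f (F.coeff m))

lemma coeff_phiAux (f : L →ₗ[K] K) (F : MvPolynomial σ L) (m : σ →₀ ℕ) :
    (phiAux f F).coeff m = f (F.coeff m) := by
  classical
  rw [phiAux, coeff_sum]
  simp only [coeff_monomial]
  rw [Finset.sum_ite_eq' F.support m (fun m' => f (F.coeff m'))]
  by_cases h : m ∈ F.support
  · simp [h]
  · simp [h, MvPolynomial.notMem_support_iff.mp h]

lemma phiAux_map_mul (f : L →ₗ[K] K) (A : MvPolynomial σ K) (F : MvPolynomial σ L) :
    phiAux f (MvPolynomial.map (algebraMap K L) A * F) = A * phiAux f F := by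
  classical
  ext m
  rw [coeff_phiAux, coeff_mul, coeff_mul, map_sum]
  refine Finset.sum_congr rfl fun x _ => ?_
  rw [coeff_phiAux, coeff_map, ← Algebra.smul_def, map_smul, smul_eq_mul]

lemma descent {A B : MvPolynomial σ K} (h : IsRelPrime A B)
    {F G : MvPolynomial σ L}
    (hFG : MvPolynomial.map (algebraMap K L) B * F = MvPolynomial.map (algebraMap K L) A * G) :
    MvPolynomial.map (algebraMap K L) A ∣ F := by
  classical
  set b := Module.Basis.ofVectorSpace K L
  have key : ∀ i, ∃ Q, phiAux (b.coord i) F = A * Q := by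
    intro i
    have h1 : B * phiAux (b.coord i) F = A * phiAux (b.coord i) G := by
      rw [← phiAux_map_mul, ← phiAux_map_mul, hFG]
    have hd : A ∣ B * phiAux (b.coord i) F := ⟨_, h1⟩
    exact h.dvd_of_dvd_mul_left hd
  choose Q hQ using key
  set s := F.support.biUnion (fun m => (b.repr (F.coeff m)).support) with hs
  refine ⟨∑ i ∈ s, C (b i) * MvPolynomial.map (algebraMap K L) (Q i), ?_⟩
  rw [Finset.mul_sum]
  have step : ∀ i ∈ s,
      MvPolynomial.map (algebraMap K L) A * (C (b i) * MvPolynomial.map (algebraMap K L) (Q i))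
      = C (b i) * MvPolynomial.map (algebraMap K L) (phiAux (b.coord i) F) := by
    intro i _
    rw [hQ i, map_mul]
    ring
  rw [Finset.sum_congr rfl step]
  ext m
  rw [coeff_sum]
  have term : ∀ i, (C (b i) * MvPolynomial.map (algebraMap K L) (phiAux (b.coord i) F)).coeff m
      = (b.repr (F.coeff m)) i • (b i) := by
    intro i
    rw [coeff_C_mul, coeff_map, coeff_phiAux, Algebra.smul_def, mul_comm]
    rfl
  simp only [term]
  by_cases hm : F.coeff m = 0
  · simp [hm]
  · have hmem : m ∈ F.support := MvPolynomial.mem_support_iff.mpr hm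
    have hsub : (b.repr (F.coeff m)).support ⊆ s := by
      intro i hi
      exact Finset.mem_biUnion.mpr ⟨m, hmem, hi⟩
    rw [← Finset.sum_subset hsub (fun i _ hi => by
      rw [Finsupp.notMem_support_iff.mp hi, zero_smul])]
    have := b.linearCombination_repr (F.coeff m)
    rw [Finsupp.linearCombination_apply, Finsupp.sum] at this
    exact this.symm

end DescentAux

noncomputable section MainAux

/-- `interIdeal` as an explicit ideal (its generating set is already an ideal). -/
def interIdealFull (F : Type) [Field F] (p : Fin 3 → F) (A B : MvPolynomial (Fin 3) F) :
    Ideal (Rloc F p) where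
  carrier := {q : Rloc F p | ∃ (M N T : MvPolynomial (Fin 3) F) (d : ℕ),
    (M * A + N * B).IsHomogeneous d ∧ T.IsHomogeneous d ∧ eval p T ≠ 0 ∧
    q.1 * toFrac F T = toFrac F (M * A + N * B)}
  zero_mem' := ⟨0, 0, 1, 0, by simpa using isHomogeneous_zero _ _ _,
    isHomogeneous_one _ _, by simp, by simp⟩
  add_mem' := by
    rintro q1 q2 ⟨M1, N1, T1, d1, hh1, hT1, hTp1, h1⟩ ⟨M2, N2, T2, d2, hh2, hT2, hTp2, h2⟩
    refine ⟨M1 * T2 + M2 * T1, N1 * T2 + N2 * T1, T1 * T2, d1 + d2, ?_, hT1.mul hT2,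
      by simp [hTp1, hTp2], ?_⟩
    · have : (M1 * T2 + M2 * T1) * A + (N1 * T2 + N2 * T1) * B
          = (M1 * A + N1 * B) * T2 + (M2 * A + N2 * B) * T1 := by ring
      rw [this]
      exact (hh1.mul hT2).add (by simpa [Nat.add_comm] using hh2.mul hT1)
    · have hco : ((q1 + q2 : Rloc F p) : FracF F) = (q1 : FracF F) + q2 := rfl
      rw [hco]
      have hrw : (M1 * T2 + M2 * T1) * A + (N1 * T2 + N2 * T1) * B
          = (M1 * A + N1 * B) * T2 + (M2 * A + N2 * B) * T1 := by ring
      rw [hrw, map_add, map_mul, map_mul, map_mul]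
      linear_combination (toFrac F T2) * h1 + (toFrac F T1) * h2
  smul_mem' := by
    rintro c x ⟨M, N, T, d, hh, hT, hTp, h⟩
    obtain ⟨S', T', e, hS', hT', hTp', h'⟩ := c.2
    refine ⟨S' * M, S' * N, T' * T, e + d, ?_, hT'.mul hT, by simp [hTp', hTp], ?_⟩
    · have : S' * M * A + S' * N * B = S' * (M * A + N * B) := by ring
      rw [this]
      exact hS'.mul hh
    · have hco : ((c • x : Rloc F p) : FracF F) = (c : FracF F) * x := rfl
      rw [hco]
      have hrw : S' * M * A + S' * N * B = S' * (M * A + N * B) := by ring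
      rw [hrw, map_mul, map_mul]
      linear_combination (x.1 * toFrac F T) * h' + (toFrac F S') * h

lemma interIdeal_le_full {F : Type} [Field F] {p : Fin 3 → F} {A B : MvPolynomial (Fin 3) F} :
    interIdeal F p A B ≤ interIdealFull F p A B :=
  Ideal.span_le.mpr (fun _ hx => hx)

end MainAux

/-- The map `ψ : R_P/(A,C)_P → R_P/(A,BC)_P` induced by multiplication by `b = B/Vⁿ`
is injective: if `b·w ∈ (A,BC)_P` then `w ∈ (A,C)_P`. -/
theorem stmt8 {K : Type} [Field K] (A B C : MvPolynomial (Fin 3) K) (m n k : ℕ)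
    (hA : A.IsHomogeneous m) (hB : B.IsHomogeneous n) (hC : C.IsHomogeneous k)
    (hcop : IsRelPrime A (B * C))
    (p : Fin 3 → AlgebraicClosure K) (hp : p ≠ 0)
    (V : Fin 3) (hV : p V ≠ 0)
    (b : Rloc (AlgebraicClosure K) p)
    (hb : b.1 * toFrac (AlgebraicClosure K) ((X V : MvPolynomial (Fin 3) (AlgebraicClosure K)) ^ n)
        = toFrac (AlgebraicClosure K) (MvPolynomial.map (algebraMap K (AlgebraicClosure K)) B)) :
    ∀ w : Rloc (AlgebraicClosure K) p,
      b * w ∈ interIdeal (AlgebraicClosure K) p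
          (MvPolynomial.map (algebraMap K (AlgebraicClosure K)) A)
          (MvPolynomial.map (algebraMap K (AlgebraicClosure K)) (B * C)) →
      w ∈ interIdeal (AlgebraicClosure K) p
          (MvPolynomial.map (algebraMap K (AlgebraicClosure K)) A)
          (MvPolynomial.map (algebraMap K (AlgebraicClosure K)) C) := by
  intro w hw
  set A' := MvPolynomial.map (algebraMap K (AlgebraicClosure K)) A with hA'
  set B' := MvPolynomial.map (algebraMap K (AlgebraicClosure K)) B with hB'
  set C' := MvPolynomial.map (algebraMap K (AlgebraicClosure K)) C with hC'
  obtain ⟨M, N, T, d, hhom, hT, hTp, heq⟩ := interIdeal_le_full hw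
  obtain ⟨W, U, e, hW, hU, hUp, hwU⟩ := w.2
  have hBC : MvPolynomial.map (algebraMap K (AlgebraicClosure K)) (B * C) = B' * C' := by
    rw [map_mul]
  rw [hBC] at hhom heq
  have hcoe : ((b * w : Rloc (AlgebraicClosure K) p) : FracF (AlgebraicClosure K)) = (b : FracF (AlgebraicClosure K)) * w := rfl
  rw [hcoe] at heq
  simp only [map_add, map_mul] at heq
  -- the polynomial identity
  have hfrac : toFrac (AlgebraicClosure K) (B' * (W * T))
      = toFrac (AlgebraicClosure K) (X V ^ n * U * (M * A' + N * (B' * C'))) := by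
    simp only [map_mul, map_add]
    linear_combination (-(toFrac (AlgebraicClosure K) W * toFrac (AlgebraicClosure K) T)) * hb
      + (-((b : FracF (AlgebraicClosure K)) * toFrac (AlgebraicClosure K) (X V ^ n) * toFrac (AlgebraicClosure K) T)) * hwU
      + (toFrac (AlgebraicClosure K) (X V ^ n) * toFrac (AlgebraicClosure K) U) * heq
  have hpoly : B' * (W * T) = X V ^ n * U * (M * A' + N * (B' * C')) :=
    IsFractionRing.injective (MvPolynomial (Fin 3) (AlgebraicClosure K)) (FracF (AlgebraicClosure K)) hfrac
  have hkey : B' * (W * T - X V ^ n * U * N * C') = A' * (X V ^ n * U * M) := by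
    linear_combination hpoly
  have hrp : IsRelPrime A B := hcop.of_mul_right_left
  obtain ⟨Q, hQ⟩ := descent hrp hkey
  refine Ideal.subset_span ⟨Q, X V ^ n * U * N, U * T, e + d, ?_, hU.mul hT, ?_, ?_⟩
  · have hWT : Q * A' + (X V ^ n * U * N) * C' = W * T := by linear_combination -hQ
    rw [hWT]
    exact hW.mul hT
  · rw [map_mul]
    exact mul_ne_zero hUp hTp
  · have hWT : Q * A' + (X V ^ n * U * N) * C' = W * T := by linear_combination -hQ
    rw [hWT, map_mul, map_mul]
    linear_combination (toFrac (AlgebraicClosure K) T) * hwU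
end

section
/- With the same notation: the sequence 0 → R_P/(A,C)_P → R_P/(A,BC)_P → R_P/(A,B)_P → 0, where the first map is multiplication by b = B/Vⁿ and the second is the natural projection, is an exact sequence of K̄-vector spaces. -/
open MvPolynomial

open MvPolynomial


section AuxLemmas

set_option maxHeartbeats 1000000
set_option synthInstance.maxHeartbeats 400000

open MvPolynomial

lemma toFrac_injective (F : Type) [Field F] : Function.Injective (toFrac F) :=
  IsFractionRing.injective _ _

lemma toFrac_ne_zero {F : Type} [Field F] {T : MvPolynomial (Fin 3) F} (h : T ≠ 0) :
    toFrac F T ≠ 0 := by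
  intro h0
  exact h (toFrac_injective F (by simpa using h0))

lemma ne_zero_of_eval {F : Type} [Field F] {p : Fin 3 → F} {T : MvPolynomial (Fin 3) F}
    (h : eval p T ≠ 0) : T ≠ 0 := by
  rintro rfl; simp at h

lemma mem_Rloc_iff {F : Type} [Field F] {p : Fin 3 → F} (q : FracF F) :
    q ∈ Rloc F p ↔ ∃ (S T : MvPolynomial (Fin 3) F) (d : ℕ),
      S.IsHomogeneous d ∧ T.IsHomogeneous d ∧ eval p T ≠ 0 ∧ q * toFrac F T = toFrac F S :=
  Iff.rfl

/-- The generating set of `interIdeal` is itself an ideal. -/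
noncomputable def witnessIdeal (F : Type) [Field F] (p : Fin 3 → F)
    (A B : MvPolynomial (Fin 3) F) : Ideal (Rloc F p) where
  carrier := {q : Rloc F p | ∃ (M N T : MvPolynomial (Fin 3) F) (d : ℕ),
    (M * A + N * B).IsHomogeneous d ∧ T.IsHomogeneous d ∧ eval p T ≠ 0 ∧
    q.1 * toFrac F T = toFrac F (M * A + N * B)}
  zero_mem' := by
    refine ⟨0, 0, 1, 0, by simpa using isHomogeneous_zero (Fin 3) F 0,
      isHomogeneous_one _ _, by simp, by simp⟩
  add_mem' := by
    rintro x y ⟨M1, N1, T1, d1, h1, hT1, hp1, e1⟩ ⟨M2, N2, T2, d2, h2, hT2, hp2, e2⟩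
    have hcomb : (M1 * T2 + M2 * T1) * A + (N1 * T2 + N2 * T1) * B
        = (M1 * A + N1 * B) * T2 + (M2 * A + N2 * B) * T1 := by ring
    refine ⟨M1 * T2 + M2 * T1, N1 * T2 + N2 * T1, T1 * T2, d1 + d2, ?_, hT1.mul hT2,
      by simp [hp1, hp2], ?_⟩
    · rw [hcomb]
      exact (h1.mul hT2).add (by simpa [Nat.add_comm] using h2.mul hT1)
    · rw [hcomb]
      have hxy : ((x + y : Rloc F p) : FracF F) = (x : FracF F) + (y : FracF F) := rfl
      rw [hxy, map_mul, map_add, map_mul, map_mul]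
      linear_combination (toFrac F T2) * e1 + (toFrac F T1) * e2
  smul_mem' := by
    intro c x hx
    obtain ⟨M, N, T, d, hMN, hT, hTp, heq⟩ := hx
    obtain ⟨S0, T0, d0, hS0, hT0, hTp0, h0⟩ := (mem_Rloc_iff (c : FracF F)).mp c.2
    have hcomb : (S0 * M) * A + (S0 * N) * B = S0 * (M * A + N * B) := by ring
    refine ⟨S0 * M, S0 * N, T0 * T, d0 + d, ?_, hT0.mul hT, by simp [hTp0, hTp], ?_⟩
    · rw [hcomb]; exact hS0.mul hMN
    · have hcx : ((c • x : Rloc F p) : FracF F) = (c : FracF F) * (x : FracF F) := rfl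
      rw [hcx, hcomb, map_mul, map_mul]
      linear_combination ((x : FracF F) * toFrac F T) * h0 + (toFrac F S0) * heq

lemma mem_witnessIdeal_iff {F : Type} [Field F] (p : Fin 3 → F)
    (A B : MvPolynomial (Fin 3) F) (q : Rloc F p) :
    q ∈ witnessIdeal F p A B ↔ ∃ (M N T : MvPolynomial (Fin 3) F) (d : ℕ),
      (M * A + N * B).IsHomogeneous d ∧ T.IsHomogeneous d ∧ eval p T ≠ 0 ∧
      q.1 * toFrac F T = toFrac F (M * A + N * B) :=
  Iff.rfl

lemma mem_interIdeal_iff {F : Type} [Field F] (p : Fin 3 → F)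
    (A B : MvPolynomial (Fin 3) F) (q : Rloc F p) :
    q ∈ interIdeal F p A B ↔ ∃ (M N T : MvPolynomial (Fin 3) F) (d : ℕ),
      (M * A + N * B).IsHomogeneous d ∧ T.IsHomogeneous d ∧ eval p T ≠ 0 ∧
      q.1 * toFrac F T = toFrac F (M * A + N * B) := by
  constructor
  · intro hq
    have hle : interIdeal F p A B ≤ witnessIdeal F p A B :=
      Ideal.span_le.mpr (fun x hx => (mem_witnessIdeal_iff _ A B x).mpr hx)
    exact (mem_witnessIdeal_iff _ A B q).mp (hle hq)
  · intro h
    exact Ideal.subset_span h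

lemma hc_mul {F : Type} [Field F] {B : MvPolynomial (Fin 3) F} {n : ℕ}
    (hB : B.IsHomogeneous n) {d : ℕ} (hnd : n ≤ d) (f : MvPolynomial (Fin 3) F) :
    homogeneousComponent d (f * B) = homogeneousComponent (d - n) f * B := by
  classical
  conv_lhs => rw [← sum_homogeneousComponent f]
  rw [Finset.sum_mul, map_sum]
  have key : ∀ e ∈ Finset.range (f.totalDegree + 1),
      homogeneousComponent d (homogeneousComponent e f * B)
        = if e = d - n then homogeneousComponent e f * B else 0 := by
    intro e _
    rw [homogeneousComponent_of_mem ((mem_homogeneousSubmodule _ _).mpr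
      ((homogeneousComponent_isHomogeneous e f).mul hB))]
    by_cases h : e = d - n
    · subst h
      rw [if_pos (Nat.sub_add_cancel hnd).symm, if_pos rfl]
    · rw [if_neg (fun hc => h (by omega)), if_neg h]
  rw [Finset.sum_congr rfl key,
    Finset.sum_ite_eq' (Finset.range (f.totalDegree + 1)) (d - n)]
  split_ifs with h
  · rfl
  · rw [Finset.mem_range] at h
    rw [homogeneousComponent_eq_zero _ _ (by omega), zero_mul]

lemma good_witness {F : Type} [Field F] {p : Fin 3 → F} {A B : MvPolynomial (Fin 3) F}
    {m n : ℕ} (hA : A.IsHomogeneous m) (hB : B.IsHomogeneous n)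
    {V : Fin 3} (hV : p V ≠ 0) {q : Rloc F p} (hq : q ∈ interIdeal F p A B) :
    ∃ (M N T : MvPolynomial (Fin 3) F) (d : ℕ), m ≤ d ∧ n ≤ d ∧
      M.IsHomogeneous (d - m) ∧ N.IsHomogeneous (d - n) ∧
      T.IsHomogeneous d ∧ eval p T ≠ 0 ∧
      q.1 * toFrac F T = toFrac F (M * A + N * B) := by
  obtain ⟨M, N, T, d, hMN, hT, hTp, heq⟩ := (mem_interIdeal_iff p A B q).mp hq
  set j := m + n with hj
  have hXj : ((X V : MvPolynomial (Fin 3) F) ^ j).IsHomogeneous j := by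
    simpa using (isHomogeneous_X F V).pow j
  have hcomb0 : (X V ^ j * M) * A + (X V ^ j * N) * B
      = X V ^ j * (M * A + N * B) := by ring
  have hcomb : ((X V ^ j * M) * A + (X V ^ j * N) * B).IsHomogeneous (j + d) := by
    rw [hcomb0]; exact hXj.mul hMN
  have key : homogeneousComponent (j + d - m) (X V ^ j * M) * A
      + homogeneousComponent (j + d - n) (X V ^ j * N) * B
      = (X V ^ j * M) * A + (X V ^ j * N) * B := by
    have h1 := homogeneousComponent_of_mem (m := j + d)
      ((mem_homogeneousSubmodule _ _).mpr hcomb)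
    rw [if_pos rfl] at h1
    rw [← hc_mul hA (by omega), ← hc_mul hB (by omega), ← map_add, h1]
  refine ⟨homogeneousComponent (j + d - m) (X V ^ j * M),
    homogeneousComponent (j + d - n) (X V ^ j * N), X V ^ j * T, j + d,
    by omega, by omega, ?_, ?_, hXj.mul hT, ?_, ?_⟩
  · simpa using homogeneousComponent_isHomogeneous (j + d - m) (X V ^ j * M)
  · simpa using homogeneousComponent_isHomogeneous (j + d - n) (X V ^ j * N)
  · simp only [eval_mul, eval_pow, eval_X]
    exact mul_ne_zero (pow_ne_zero _ hV) hTp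
  · rw [key, hcomb0, map_mul, map_mul]
    linear_combination (toFrac F (X V ^ j)) * heq

section Descend

variable {K L : Type} [Field K] [Field L] [Algebra K L]

/-- Apply a `K`-linear functional `L → K` to all coefficients. -/
noncomputable def coeffMap (φ : L →ₗ[K] K) (g : MvPolynomial (Fin 3) L) :
    MvPolynomial (Fin 3) K :=
  ∑ s ∈ g.support, monomial s (φ (g.coeff s))

lemma coeff_coeffMap (φ : L →ₗ[K] K) (g : MvPolynomial (Fin 3) L) (t : Fin 3 →₀ ℕ) :
    (coeffMap φ g).coeff t = φ (g.coeff t) := by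
  classical
  rw [coeffMap, coeff_sum]
  simp_rw [coeff_monomial]
  rw [Finset.sum_ite_eq' g.support t]
  split_ifs with h
  · rfl
  · rw [notMem_support_iff.mp h, map_zero]

lemma coeffMap_map_mul (φ : L →ₗ[K] K) (Bp : MvPolynomial (Fin 3) K)
    (Q : MvPolynomial (Fin 3) L) :
    coeffMap φ (MvPolynomial.map (algebraMap K L) Bp * Q) = Bp * coeffMap φ Q := by
  ext t
  simp only [coeff_coeffMap, coeff_mul, map_sum, coeff_map]
  refine Finset.sum_congr rfl fun x _ => ?_
  rw [← Algebra.smul_def, map_smul, smul_eq_mul]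

lemma map_dvd_of_isRelPrime {A B : MvPolynomial (Fin 3) K} (hcop : IsRelPrime A B)
    (G Q : MvPolynomial (Fin 3) L)
    (h : MvPolynomial.map (algebraMap K L) A * G = MvPolynomial.map (algebraMap K L) B * Q) :
    MvPolynomial.map (algebraMap K L) B ∣ G := by
  classical
  set e := Module.Basis.ofVectorSpace K L with he
  set I : Finset (Module.Basis.ofVectorSpaceIndex K L) :=
    G.support.biUnion (fun s => (e.repr (G.coeff s)).support) with hI
  have hGdecomp : G = ∑ i ∈ I, (C (e i) : MvPolynomial (Fin 3) L) *
      MvPolynomial.map (algebraMap K L) (coeffMap (e.coord i) G) := by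
    ext t
    rw [coeff_sum]
    simp only [coeff_C_mul, coeff_map, coeff_coeffMap, Module.Basis.coord_apply]
    by_cases ht : t ∈ G.support
    · have hsub : (e.repr (G.coeff t)).support ⊆ I := by
        rw [hI]
        exact Finset.subset_biUnion_of_mem (fun s => (e.repr (G.coeff s)).support) ht
      have h2 := e.linearCombination_repr (G.coeff t)
      rw [Finsupp.linearCombination_apply, Finsupp.sum] at h2
      calc G.coeff t
          = ∑ i ∈ (e.repr (G.coeff t)).support, (e.repr (G.coeff t)) i • e i := h2.symm
        _ = ∑ i ∈ I, (e.repr (G.coeff t)) i • e i :=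
            Finset.sum_subset hsub (fun i _ hi => by
              rw [Finsupp.notMem_support_iff.mp hi, zero_smul])
        _ = ∑ i ∈ I, e i * algebraMap K L ((e.repr (G.coeff t)) i) :=
            Finset.sum_congr rfl fun i _ => by rw [Algebra.smul_def, mul_comm]
    · rw [notMem_support_iff.mp ht]
      symm
      refine Finset.sum_eq_zero fun i _ => ?_
      simp
  have hdvd : ∀ i : Module.Basis.ofVectorSpaceIndex K L, B ∣ coeffMap (e.coord i) G := by
    intro i
    have h2 : A * coeffMap (e.coord i) G = B * coeffMap (e.coord i) Q := by
      have h3 := congrArg (coeffMap (e.coord i)) h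
      rwa [coeffMap_map_mul, coeffMap_map_mul] at h3
    exact hcop.symm.dvd_of_dvd_mul_left ⟨coeffMap (e.coord i) Q, h2⟩
  choose R hR using hdvd
  refine ⟨∑ i ∈ I, (C (e i) : MvPolynomial (Fin 3) L) *
    MvPolynomial.map (algebraMap K L) (R i), ?_⟩
  rw [hGdecomp, Finset.mul_sum]
  refine Finset.sum_congr rfl fun i _ => ?_
  rw [hR i, map_mul]
  ring

end Descend

end AuxLemmas

set_option maxHeartbeats 1000000 in
set_option synthInstance.maxHeartbeats 400000 in
/-- The sequence `0 → R_P/(A,C)_P → R_P/(A,BC)_P → R_P/(A,B)_P → 0`, with first map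
multiplication by `b = B/Vⁿ` and second map the natural projection, is exact. -/
theorem stmt9 {K : Type} [Field K] (A B C : MvPolynomial (Fin 3) K) (m n k : ℕ)
    (hA : A.IsHomogeneous m) (hB : B.IsHomogeneous n) (hC : C.IsHomogeneous k)
    (hcopB : IsRelPrime A B) (hcopC : IsRelPrime A C)
    (p : Fin 3 → AlgebraicClosure K) (hp : p ≠ 0)
    (V : Fin 3) (hV : p V ≠ 0)
    (b : Rloc (AlgebraicClosure K) p)
    (hb : b.1 * toFrac (AlgebraicClosure K) ((X V : MvPolynomial (Fin 3) (AlgebraicClosure K)) ^ n)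
        = toFrac (AlgebraicClosure K) (MvPolynomial.map (algebraMap K (AlgebraicClosure K)) B)) :
    -- exactness at `R_P/(A,C)_P`: multiplication by `b` is injective
    (∀ w : Rloc (AlgebraicClosure K) p,
      b * w ∈ interIdeal (AlgebraicClosure K) p
          (MvPolynomial.map (algebraMap K (AlgebraicClosure K)) A)
          (MvPolynomial.map (algebraMap K (AlgebraicClosure K)) (B * C)) →
      w ∈ interIdeal (AlgebraicClosure K) p
          (MvPolynomial.map (algebraMap K (AlgebraicClosure K)) A)
          (MvPolynomial.map (algebraMap K (AlgebraicClosure K)) C)) ∧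
    -- exactness at `R_P/(A,BC)_P`: the kernel of the projection is the image of `ψ`
    (∀ w : Rloc (AlgebraicClosure K) p,
      w ∈ interIdeal (AlgebraicClosure K) p
          (MvPolynomial.map (algebraMap K (AlgebraicClosure K)) A)
          (MvPolynomial.map (algebraMap K (AlgebraicClosure K)) B) ↔
      ∃ u : Rloc (AlgebraicClosure K) p,
        w - b * u ∈ interIdeal (AlgebraicClosure K) p
          (MvPolynomial.map (algebraMap K (AlgebraicClosure K)) A)
          (MvPolynomial.map (algebraMap K (AlgebraicClosure K)) (B * C))) ∧
    -- exactness at `R_P/(A,B)_P`: the projection is surjective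
    (∀ v : (Rloc (AlgebraicClosure K) p) ⧸ (interIdeal (AlgebraicClosure K) p
          (MvPolynomial.map (algebraMap K (AlgebraicClosure K)) A)
          (MvPolynomial.map (algebraMap K (AlgebraicClosure K)) B)),
      ∃ w : Rloc (AlgebraicClosure K) p,
        Ideal.Quotient.mk (interIdeal (AlgebraicClosure K) p
          (MvPolynomial.map (algebraMap K (AlgebraicClosure K)) A)
          (MvPolynomial.map (algebraMap K (AlgebraicClosure K)) B)) w = v) := by
  classical
  have hinj : Function.Injective (toFrac (AlgebraicClosure K)) :=
    toFrac_injective (AlgebraicClosure K)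
  set A' := MvPolynomial.map (algebraMap K (AlgebraicClosure K)) A with hA'def
  set B' := MvPolynomial.map (algebraMap K (AlgebraicClosure K)) B with hB'def
  set C' := MvPolynomial.map (algebraMap K (AlgebraicClosure K)) C with hC'def
  set BC' := MvPolynomial.map (algebraMap K (AlgebraicClosure K)) (B * C) with hBC'def
  have hBCmul : BC' = B' * C' := by
    rw [hBC'def, hB'def, hC'def]
    exact map_mul _ _ _
  have hA' : A'.IsHomogeneous m := hA.map _
  have hB' : B'.IsHomogeneous n := hB.map _
  have hC' : C'.IsHomogeneous k := hC.map _
  have hXh : ∀ j : ℕ, ((X V : MvPolynomial (Fin 3) (AlgebraicClosure K)) ^ j).IsHomogeneous j := by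
    intro j; simpa using (isHomogeneous_X (AlgebraicClosure K) V).pow j
  have hXe : ∀ j : ℕ, eval p ((X V : MvPolynomial (Fin 3) (AlgebraicClosure K)) ^ j) ≠ 0 := by
    intro j; rw [eval_pow, eval_X]; exact pow_ne_zero _ hV
  have hbmem : b ∈ interIdeal (AlgebraicClosure K) p A' B' := by
    refine (mem_interIdeal_iff p A' B' b).mpr ⟨0, 1, X V ^ n, n, ?_, hXh n, hXe n, ?_⟩
    · rw [show (0 : MvPolynomial (Fin 3) (AlgebraicClosure K)) * A' + 1 * B' = B' by ring]
      exact hB'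
    · rw [show (0 : MvPolynomial (Fin 3) (AlgebraicClosure K)) * A' + 1 * B' = B' by ring]
      exact hb
  refine ⟨?_, ?_, fun v => Ideal.Quotient.mk_surjective v⟩
  · -- injectivity of multiplication by b
    intro w hbw
    by_cases hB0 : B = 0
    · have hAu : IsUnit A := isRelPrime_zero_right.mp (hB0 ▸ hcopB)
      have hAu' : IsUnit A' := hAu.map _
      obtain ⟨U, hU⟩ := isUnit_iff_exists_inv.mp hAu'
      obtain ⟨S', T', e, hS', hT', hTp', hw'⟩ :=
        (mem_Rloc_iff (w : FracF (AlgebraicClosure K))).mp w.2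
      refine (mem_interIdeal_iff p A' C' w).mpr ⟨S' * U, 0, T', e, ?_, hT', hTp', ?_⟩
      · rw [show S' * U * A' + 0 * C' = S' * (A' * U) by ring, hU, mul_one]; exact hS'
      · rw [show S' * U * A' + 0 * C' = S' * (A' * U) by ring, hU, mul_one]; exact hw'
    · obtain ⟨M, N, T, d, hMN, hT, hTp, heq⟩ :=
        (mem_interIdeal_iff p A' BC' (b * w)).mp hbw
      obtain ⟨S', T', e, hS', hT', hTp', hw'⟩ :=
        (mem_Rloc_iff (w : FracF (AlgebraicClosure K))).mp w.2
      have hbw1 : ((b * w : Rloc (AlgebraicClosure K) p) : FracF (AlgebraicClosure K))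
          = (b : FracF (AlgebraicClosure K)) * (w : FracF (AlgebraicClosure K)) := rfl
      rw [hbw1] at heq
      have keyfrac : toFrac (AlgebraicClosure K) (B' * (S' * T))
          = toFrac (AlgebraicClosure K) (X V ^ n * T' * (M * A' + N * BC')) := by
        rw [map_mul, map_mul, map_mul, map_mul]
        linear_combination (-(toFrac (AlgebraicClosure K) S' * toFrac (AlgebraicClosure K) T)) * hb
          - ((b : FracF (AlgebraicClosure K)) * toFrac (AlgebraicClosure K) (X V ^ n)
              * toFrac (AlgebraicClosure K) T) * hw'
          + (toFrac (AlgebraicClosure K) (X V ^ n) * toFrac (AlgebraicClosure K) T') * heq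
      have keypoly : B' * (S' * T) = X V ^ n * T' * (M * A' + N * BC') := hinj keyfrac
      rw [hBCmul] at keypoly
      have hdvd : B' ∣ X V ^ n * T' * M := by
        rw [hB'def]
        refine map_dvd_of_isRelPrime hcopB (X V ^ n * T' * M)
          (S' * T - X V ^ n * T' * N * C') ?_
        rw [← hA'def, ← hB'def]
        linear_combination -keypoly
      obtain ⟨M₁, hM₁⟩ := hdvd
      have hB'0 : B' ≠ 0 := by
        rw [hB'def]
        intro hcon
        exact hB0 (MvPolynomial.map_injective (algebraMap K (AlgebraicClosure K))
          (algebraMap K (AlgebraicClosure K)).injective (by simpa using hcon))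
      have hfin : S' * T = M₁ * A' + (X V ^ n * T' * N) * C' := by
        apply mul_left_cancel₀ hB'0
        linear_combination keypoly + A' * hM₁
      refine (mem_interIdeal_iff p A' C' w).mpr
        ⟨M₁, X V ^ n * T' * N, T' * T, e + d, ?_, hT'.mul hT, by simp [hTp', hTp], ?_⟩
      · rw [← hfin]; exact hS'.mul hT
      · rw [← hfin, map_mul, map_mul]
        linear_combination (toFrac (AlgebraicClosure K) T) * hw'
  · -- exactness in the middle
    intro w
    constructor
    · intro hw
      obtain ⟨M, N, T, d, hm, hn, hM, hN, hT, hTp, heq⟩ := good_witness hA' hB' hV hw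
      have hT0 : toFrac (AlgebraicClosure K) T ≠ 0 := toFrac_ne_zero (ne_zero_of_eval hTp)
      have hNX : (N * X V ^ n).IsHomogeneous d := by
        have h2 := hN.mul (hXh n)
        simpa [Nat.sub_add_cancel hn] using h2
      have humem : (toFrac (AlgebraicClosure K) (N * X V ^ n)
          * (toFrac (AlgebraicClosure K) T)⁻¹) ∈ Rloc (AlgebraicClosure K) p :=
        (mem_Rloc_iff _).mpr ⟨N * X V ^ n, T, d, hNX, hT, hTp, by field_simp⟩
      set u : Rloc (AlgebraicClosure K) p :=
        ⟨toFrac (AlgebraicClosure K) (N * X V ^ n) * (toFrac (AlgebraicClosure K) T)⁻¹,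
          humem⟩ with hu
      have hueq : (u : FracF (AlgebraicClosure K)) * toFrac (AlgebraicClosure K) T
          = toFrac (AlgebraicClosure K) (N * X V ^ n) := by
        show (toFrac (AlgebraicClosure K) (N * X V ^ n)
          * (toFrac (AlgebraicClosure K) T)⁻¹) * toFrac (AlgebraicClosure K) T = _
        field_simp
      refine ⟨u, (mem_interIdeal_iff p A' BC' _).mpr
        ⟨X V ^ n * M, 0, T * X V ^ n, d + n, ?_, hT.mul (hXh n), ?_, ?_⟩⟩
      · rw [show X V ^ n * M * A' + 0 * BC' = X V ^ n * M * A' by ring]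
        have h2 := ((hXh n).mul hM).mul hA'
        have h3 : n + (d - m) + m = d + n := by omega
        exact h3 ▸ h2
      · simp only [eval_mul, eval_pow, eval_X]
        exact mul_ne_zero hTp (pow_ne_zero _ hV)
      · have hsub : ((w - b * u : Rloc (AlgebraicClosure K) p) : FracF (AlgebraicClosure K))
            = (w : FracF (AlgebraicClosure K))
              - (b : FracF (AlgebraicClosure K)) * (u : FracF (AlgebraicClosure K)) := rfl
        rw [hsub, show X V ^ n * M * A' + 0 * BC' = X V ^ n * M * A' by ring,
          show (X V ^ n * M * A' : MvPolynomial (Fin 3) (AlgebraicClosure K))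
            = X V ^ n * (M * A' + N * B') - (N * X V ^ n) * B' by ring,
          map_mul, map_sub, map_mul, map_mul]
        linear_combination (toFrac (AlgebraicClosure K) (X V ^ n)) * heq
          - ((u : FracF (AlgebraicClosure K)) * toFrac (AlgebraicClosure K) T) * hb
          - (toFrac (AlgebraicClosure K) B') * hueq
    · rintro ⟨u, hu⟩
      have h1 : w - b * u ∈ interIdeal (AlgebraicClosure K) p A' B' := by
        obtain ⟨M, N, T, d, hMN, hT, hTp, heq⟩ :=
          (mem_interIdeal_iff p A' BC' _).mp hu
        refine (mem_interIdeal_iff p A' B' _).mpr ⟨M, N * C', T, d, ?_, hT, hTp, ?_⟩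
        · rw [show M * A' + N * C' * B' = M * A' + N * (B' * C') by ring, ← hBCmul]
          exact hMN
        · rw [show M * A' + N * C' * B' = M * A' + N * (B' * C') by ring, ← hBCmul]
          exact heq
      have h2 : b * u ∈ interIdeal (AlgebraicClosure K) p A' B' :=
        Ideal.mul_mem_right u _ hbmem
      have h3 := Ideal.add_mem _ h1 h2
      rwa [sub_add_cancel] at h3
end

section
/- Special case of Bézout: if A ∈ K[x,y,z] is homogeneous of degree m with no common factor with the linear form L = y - βz (β ∈ K̄), then ∑_P i_P(A, L) = m; i.e., a curve of degree m meets a line in exactly m points counted with multiplicity. -/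
open MvPolynomial

/-!
Restricted to the line `L = y - βz`, parametrised near one of its points `p` as `p + X • w`, a
form `T` of degree `d` becomes a polynomial `T(p + X • w)` of degree `≤ d`. The local ring at `p`
modulo `(B, L)` is isomorphic to `k[X]/(X^e)`, where `e` is the order of vanishing of
`B(p + X • w)` at `0`, via `S/T ↦ S(p + X • w)/T(p + X • w)`: this is onto because every
polynomial is the dehomogenisation of a binary form, and its kernel is `(B, L)` because a form
vanishing on the line is divisible by `L`. At the points `(t, β, 1)` these orders are the root
multiplicities of `f = B(X, β, 1)`, which add up to `deg f` as `k` is algebraically closed; at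
`(1, 0, 0)` the order is `m - deg f`.
-/

namespace MvPolynomial

lemma dvd_sub_of_dvd_sub_X {σ R A : Type*} [CommRing R] [CommRing A] [Algebra R A]
    (φ ψ : MvPolynomial σ R →ₐ[R] A) (a : A) (h : ∀ i, a ∣ φ (X i) - ψ (X i))
    (H : MvPolynomial σ R) : a ∣ φ H - ψ H := by
  have hext : (Ideal.Quotient.mkₐ R (Ideal.span {a})).comp φ =
      (Ideal.Quotient.mkₐ R (Ideal.span {a})).comp ψ :=
    algHom_ext fun i => by simpa [Ideal.Quotient.eq, Ideal.mem_span_singleton] using h i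
  simpa [Ideal.Quotient.eq, Ideal.mem_span_singleton] using congr($hext H)

variable {R : Type*} [CommSemiring R]

lemma IsHomogeneous.aeval_smul {σ A : Type*} [CommSemiring A] [Algebra R A]
    {T : MvPolynomial σ R} {d : ℕ} (hT : T.IsHomogeneous d) (c : R) (v : σ → A) :
    MvPolynomial.aeval (c • v) T = c ^ d • MvPolynomial.aeval v T := by
  conv_lhs => rw [T.as_sum]
  conv_rhs => rw [T.as_sum]
  simp only [map_sum, Finset.smul_sum, aeval_monomial]
  refine Finset.sum_congr rfl fun u hu => ?_
  have hdeg : u.degree = d := by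
    rw [Finsupp.degree_eq_weight_one]
    exact hT (mem_support_iff.mp hu)
  simp only [Pi.smul_apply, Algebra.smul_def, mul_pow, map_pow, Finsupp.prod,
    Finset.prod_mul_distrib, Finset.prod_pow_eq_pow_sum, ← Finsupp.degree_apply, hdeg]
  ring

lemma IsHomogeneous.natDegree_aeval_X_one_le {q : MvPolynomial (Fin 2) R} {n : ℕ}
    (hq : q.IsHomogeneous n) :
    (MvPolynomial.aeval ![(Polynomial.X : Polynomial R), 1] q).natDegree ≤ n := by
  rw [← Polynomial.homogenize_eq_of_isHomogeneous
      (p := MvPolynomial.aeval ![(Polynomial.X : Polynomial R), 1] q) hq rfl,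
    Polynomial.homogenize, map_sum]
  refine Polynomial.natDegree_sum_le_of_forall_le _ _ fun kl hkl => ?_
  rw [Finset.HasAntidiagonal.mem_antidiagonal] at hkl
  rw [aeval_monomial, Finsupp.prod_pow, Fin.prod_univ_two]
  simpa using (Polynomial.natDegree_C_mul_X_pow_le _ kl.1).trans (by omega : kl.1 ≤ n)

end MvPolynomial

namespace Polynomial

lemma aeval_one_X_homogenize {R : Type*} [CommSemiring R] {g : R[X]} {n : ℕ}
    (hg : g.natDegree ≤ n) : MvPolynomial.aeval ![1, X] (g.homogenize n) = g.reflect n := by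
  refine induction_with_natDegree_le
    (fun g => MvPolynomial.aeval ![1, X] (g.homogenize n) = g.reflect n) n (by simp)
    (fun i r _ hi => ?_) (fun f g _ _ hf hg => ?_) g hg
  · simp [homogenize_C_mul, homogenize_X_pow hi, revAt_le hi]
  · simp only [homogenize_add, map_add, hf, hg, reflect_add]

lemma natTrailingDegree_reflect {R : Type*} [CommSemiring R] {f : R[X]} (hf : f ≠ 0) {n : ℕ}
    (hn : f.natDegree ≤ n) : (f.reflect n).natTrailingDegree = n - f.natDegree := by
  refine le_antisymm (natTrailingDegree_le_of_ne_zero ?_)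
    (le_natTrailingDegree (by simpa using hf) fun i hi => ?_)
  · rw [coeff_reflect, revAt_le (by omega), Nat.sub_sub_self hn]
    simpa using hf
  · rw [coeff_reflect, revAt_le (by omega)]
    exact coeff_eq_zero_of_natDegree_lt (by omega)

variable {k : Type*} [Field k]

lemma isUnit_mk_X_pow {f : k[X]} (hf : f.coeff 0 ≠ 0) (e : ℕ) :
    IsUnit (Ideal.Quotient.mk (Ideal.span {X ^ e}) f) := by
  obtain ⟨a, b, hab⟩ :=
    (irreducible_X.coprime_iff_not_dvd.mpr (mt X_dvd_iff.mp hf)).pow_left (m := e)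
  refine IsUnit.of_mul_eq_one (Ideal.Quotient.mk _ b) ?_
  rw [← map_mul, ← map_one (Ideal.Quotient.mk _), Ideal.Quotient.eq, Ideal.mem_span_singleton]
  exact ⟨-a, by linear_combination hab⟩

lemma finsum_rootMultiplicity [IsAlgClosed k] (f : k[X]) :
    ∑ᶠ t, f.rootMultiplicity t = f.natDegree := by
  classical
  rw [finsum_eq_sum_of_support_subset (s := f.roots.toFinset) _ fun t ht => by
    simpa [← count_roots] using ht]
  simp_rw [← count_roots]
  rw [Multiset.toFinset_sum_count_eq, splits_iff_card_roots.mp (IsAlgClosed.splits f)]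

end Polynomial

namespace LineIntersection

noncomputable section

variable {k : Type} [Field k]

abbrev lineForm (β : k) : MvPolynomial (Fin 3) k := X 1 - C β * X 2

/-- `p` and `w` span the plane `y = β z` of `k³`, whose points are determined by their
coordinates `x, z`. -/
structure IsLineChart (β : k) (p w : Fin 3 → k) : Prop where
  point : p 1 = β * p 2
  direction : w 1 = β * w 2
  independent : w 0 * p 2 - p 0 * w 2 ≠ 0

/-- `T ↦ T(s • w + t • p)` with `s = X 0`, `t = X 1`. -/
def binaryRestrict (p w : Fin 3 → k) : MvPolynomial (Fin 3) k →ₐ[k] MvPolynomial (Fin 2) k :=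
  aeval fun i => C (w i) * X 0 + C (p i) * X 1

/-- `T ↦ T(p + X • w)`. -/
def lineRestrict (p w : Fin 3 → k) : MvPolynomial (Fin 3) k →ₐ[k] Polynomial k :=
  (aeval ![Polynomial.X, 1]).comp (binaryRestrict p w)

/-- Sends `s, t` to the linear forms in `x, z` dual to `w, p` on the plane `y = β z`
(Cramer's rule). -/
def binaryLift (p w : Fin 3 → k) : MvPolynomial (Fin 2) k →ₐ[k] MvPolynomial (Fin 3) k :=
  aeval ![C (w 0 * p 2 - p 0 * w 2)⁻¹ * (C (p 2) * X 0 - C (p 0) * X 2),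
    C (w 0 * p 2 - p 0 * w 2)⁻¹ * (C (w 0) * X 2 - C (w 2) * X 0)]

section LineChart

variable {β : k} {p w : Fin 3 → k}

lemma binaryRestrict_X (i : Fin 3) :
    binaryRestrict p w (X i) = C (w i) * X 0 + C (p i) * X 1 :=
  aeval_X _ _

@[simp]
lemma lineRestrict_X (i : Fin 3) :
    lineRestrict p w (X i) = Polynomial.C (w i) * Polynomial.X + Polynomial.C (p i) := by
  simp [lineRestrict, binaryRestrict_X, Polynomial.C_eq_algebraMap]

lemma binaryLift_binaryRestrict_X (i : Fin 3) :
    binaryLift p w (binaryRestrict p w (X i)) =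
      C (w i) * (C (w 0 * p 2 - p 0 * w 2)⁻¹ * (C (p 2) * X 0 - C (p 0) * X 2)) +
      C (p i) * (C (w 0 * p 2 - p 0 * w 2)⁻¹ * (C (w 0) * X 2 - C (w 2) * X 0)) := by
  simp [binaryRestrict_X, binaryLift]

lemma IsLineChart.smul (hc : IsLineChart β p w) {c : k} (hc0 : c ≠ 0) :
    IsLineChart β (c • p) (c • w) where
  point := by simp only [Pi.smul_apply, smul_eq_mul, hc.point]; ring
  direction := by simp only [Pi.smul_apply, smul_eq_mul, hc.direction]; ring
  independent := by
    have h : c * w 0 * (c * p 2) - c * p 0 * (c * w 2) = c ^ 2 * (w 0 * p 2 - p 0 * w 2) := by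
      ring
    simp only [Pi.smul_apply, smul_eq_mul]
    rw [h]
    exact mul_ne_zero (pow_ne_zero 2 hc0) hc.independent

lemma lineRestrict_lineForm (hc : IsLineChart β p w) : lineRestrict p w (lineForm β) = 0 := by
  simp only [map_sub, map_mul, lineRestrict_X, algHom_C, Polynomial.algebraMap_eq, hc.point,
    hc.direction]
  ring

lemma isHomogeneous_binaryRestrict {T : MvPolynomial (Fin 3) k} {d : ℕ}
    (hT : T.IsHomogeneous d) : (binaryRestrict p w T).IsHomogeneous d := by
  simpa only [one_mul, binaryRestrict] using hT.aeval _ fun i =>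
    (isHomogeneous_C_mul_X (w i) 0).add (isHomogeneous_C_mul_X (p i) 1)

lemma isHomogeneous_binaryLift {q : MvPolynomial (Fin 2) k} {d : ℕ}
    (hq : q.IsHomogeneous d) : (binaryLift p w q).IsHomogeneous d := by
  rw [← one_mul d]
  refine hq.aeval _ fun i => ?_
  fin_cases i <;> refine IsHomogeneous.C_mul (IsHomogeneous.sub ?_ ?_) _ <;>
    exact isHomogeneous_C_mul_X _ _

lemma natDegree_lineRestrict_le {T : MvPolynomial (Fin 3) k} {d : ℕ} (hT : T.IsHomogeneous d) :
    (lineRestrict p w T).natDegree ≤ d :=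
  (isHomogeneous_binaryRestrict hT).natDegree_aeval_X_one_le

lemma lineRestrict_coeff_zero (T : MvPolynomial (Fin 3) k) :
    (lineRestrict p w T).coeff 0 = eval p T := by
  have h : (Polynomial.aeval (0 : k)).comp (lineRestrict p w) = aeval p :=
    algHom_ext fun i => by simp
  rw [Polynomial.coeff_zero_eq_eval_zero, ← coe_aeval_eq_eval, ← h]
  simp

lemma lineRestrict_smul {T : MvPolynomial (Fin 3) k} {d : ℕ} (hT : T.IsHomogeneous d) (c : k) :
    lineRestrict (c • p) (c • w) T = c ^ d • lineRestrict p w T := by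
  have h : lineRestrict (c • p) (c • w) = aeval (c • fun i => lineRestrict p w (X i)) :=
    algHom_ext fun i => by
      simp only [lineRestrict_X, aeval_X, Pi.smul_apply, smul_eq_mul, Polynomial.smul_eq_C_mul,
        Polynomial.C_mul]
      ring
  rw [h, hT.aeval_smul]
  exact congr(c ^ d • $((aeval_unique (lineRestrict p w)).symm) T)

lemma lineRestrict_add_smul (t : k) (T : MvPolynomial (Fin 3) k) :
    lineRestrict (p + t • w) w T = (lineRestrict p w T).comp (Polynomial.X + Polynomial.C t) := by
  have h : lineRestrict (p + t • w) w =
      (Polynomial.aeval (Polynomial.X + Polynomial.C t)).comp (lineRestrict p w) :=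
    algHom_ext fun i => by
      simp only [lineRestrict_X, AlgHom.comp_apply, map_add, map_mul, Polynomial.aeval_C,
        Polynomial.aeval_X, Polynomial.algebraMap_eq, Pi.add_apply, Pi.smul_apply, smul_eq_mul]
      ring
  rw [h, AlgHom.comp_apply, Polynomial.comp_eq_aeval]

lemma lineRestrict_swap {T : MvPolynomial (Fin 3) k} {d : ℕ} (hT : T.IsHomogeneous d) :
    lineRestrict w p T = (lineRestrict p w T).reflect d := by
  have h : lineRestrict w p = (aeval ![1, Polynomial.X]).comp (binaryRestrict p w) :=
    algHom_ext fun i => by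
      simp only [lineRestrict_X, AlgHom.comp_apply, binaryRestrict_X, map_add, map_mul, algHom_C,
        aeval_X, Polynomial.algebraMap_eq, Matrix.cons_val_zero, Matrix.cons_val_one,
        Matrix.cons_val_fin_one, mul_one]
      ring
  rw [h, AlgHom.comp_apply, ← Polynomial.homogenize_eq_of_isHomogeneous
    (p := lineRestrict p w T) (isHomogeneous_binaryRestrict hT) rfl,
    Polynomial.aeval_one_X_homogenize (natDegree_lineRestrict_le hT)]

lemma binaryRestrict_comp_binaryLift (hc : IsLineChart β p w) :
    (binaryRestrict p w).comp (binaryLift p w) = AlgHom.id k _ := by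
  have h : C (w 0 * p 2 - p 0 * w 2)⁻¹ * C (w 0 * p 2 - p 0 * w 2) =
      (1 : MvPolynomial (Fin 2) k) := by
    rw [← C_mul, inv_mul_cancel₀ hc.independent, C_1]
  simp only [map_sub, map_mul] at h
  refine algHom_ext fun i => ?_
  fin_cases i <;>
    simp only [binaryLift, AlgHom.comp_apply, AlgHom.id_apply, aeval_X, map_mul, map_sub,
      algHom_C, algebraMap_eq, binaryRestrict_X, Fin.zero_eta, Fin.mk_one, Matrix.cons_val_zero,
      Matrix.cons_val_one, Matrix.cons_val_fin_one]
  · linear_combination (X 0) * h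
  · linear_combination (X 1) * h

lemma lineForm_dvd_sub_binaryLift_binaryRestrict (hc : IsLineChart β p w)
    (H : MvPolynomial (Fin 3) k) : lineForm β ∣ H - binaryLift p w (binaryRestrict p w H) := by
  have h : C (w 0 * p 2 - p 0 * w 2)⁻¹ * C (w 0 * p 2 - p 0 * w 2) =
      (1 : MvPolynomial (Fin 3) k) := by
    rw [← C_mul, inv_mul_cancel₀ hc.independent, C_1]
  simp only [map_sub, map_mul] at h
  refine dvd_sub_of_dvd_sub_X (AlgHom.id k _) ((binaryLift p w).comp (binaryRestrict p w)) _
    (fun i => ?_) H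
  rw [AlgHom.id_apply, AlgHom.comp_apply, binaryLift_binaryRestrict_X]
  fin_cases i <;> simp only [Fin.zero_eta, Fin.mk_one, Fin.reduceFinMk]
  · exact ⟨0, by linear_combination (-X 0) * h⟩
  · refine ⟨1, ?_⟩
    rw [hc.point, hc.direction, C_mul, C_mul]
    linear_combination (-C β * X 2) * h
  · exact ⟨0, by linear_combination (-X 2) * h⟩

lemma lineForm_dvd_of_lineRestrict_eq_zero (hc : IsLineChart β p w) {H : MvPolynomial (Fin 3) k}
    {d : ℕ} (hH : H.IsHomogeneous d) (h0 : lineRestrict p w H = 0) : lineForm β ∣ H := by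
  have hbin : binaryRestrict p w H = 0 := by
    rw [← Polynomial.homogenize_eq_of_isHomogeneous (isHomogeneous_binaryRestrict hH) h0,
      Polynomial.homogenize_zero]
  simpa [hbin] using lineForm_dvd_sub_binaryLift_binaryRestrict hc H

lemma exists_isHomogeneous_lineRestrict_eq (hc : IsLineChart β p w) {g : Polynomial k}
    {n : ℕ} (hg : g.natDegree ≤ n) :
    ∃ G : MvPolynomial (Fin 3) k, G.IsHomogeneous n ∧ lineRestrict p w G = g := by
  refine ⟨binaryLift p w (g.homogenize n),
    isHomogeneous_binaryLift (Polynomial.isHomogeneous_homogenize g), ?_⟩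
  rw [lineRestrict, AlgHom.comp_apply, ← AlgHom.comp_apply (binaryRestrict p w),
    binaryRestrict_comp_binaryLift hc, AlgHom.id_apply, Polynomial.aeval_homogenize_X_one _ hg]

end LineChart

def nonvanishingAt (p : Fin 3 → k) : Submonoid (MvPolynomial (Fin 3) k) where
  carrier := {T | eval p T ≠ 0}
  mul_mem' ha hb := by simp_all
  one_mem' := by simp

lemma mem_nonvanishingAt {p : Fin 3 → k} {T : MvPolynomial (Fin 3) k} :
    T ∈ nonvanishingAt p ↔ eval p T ≠ 0 :=
  Iff.rfl

lemma nonvanishingAt_le_nonZeroDivisors (p : Fin 3 → k) :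
    nonvanishingAt p ≤ nonZeroDivisors (MvPolynomial (Fin 3) k) := fun T hT =>
  mem_nonZeroDivisors_of_ne_zero fun h => hT (by simp [h])

abbrev localRingAt (p : Fin 3 → k) : Subalgebra (MvPolynomial (Fin 3) k) (FracF k) :=
  Localization.subalgebra (FracF k) (nonvanishingAt p) (nonvanishingAt_le_nonZeroDivisors p)

lemma mem_localRingAt_of_mem_Rloc {p : Fin 3 → k} {q : FracF k} (hq : q ∈ Rloc k p) :
    q ∈ localRingAt p := by
  obtain ⟨S, T, d, -, -, hT, hqT⟩ := hq
  exact ⟨S, T, hT, IsLocalization.eq_mk'_iff_mul_eq.mpr hqT⟩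

def Rloc.toLocalRingAt (p : Fin 3 → k) : Rloc k p →+* localRingAt p :=
  ((Rloc k p).val : Rloc k p →+* FracF k).codRestrict (localRingAt p)
    fun q => mem_localRingAt_of_mem_Rloc q.2

section Lift

variable {p : Fin 3 → k} {Q : Type} [CommRing Q] [Algebra k Q]
  (g : MvPolynomial (Fin 3) k →ₐ[k] Q) (hg : ∀ T, eval p T ≠ 0 → IsUnit (g T))

def liftRloc : Rloc k p →ₐ[k] Q where
  toRingHom := (IsLocalization.lift (M := nonvanishingAt p) (S := localRingAt p)
    (g := (g : MvPolynomial (Fin 3) k →+* Q)) fun T => hg T (mem_nonvanishingAt.mp T.2)).comp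
    (Rloc.toLocalRingAt p)
  commutes' r := by
    have h : Rloc.toLocalRingAt p (algebraMap k _ r) =
        algebraMap _ (localRingAt p) (algebraMap k (MvPolynomial (Fin 3) k) r) :=
      Subtype.ext (IsScalarTower.algebraMap_apply k (MvPolynomial (Fin 3) k) (FracF k) r)
    change IsLocalization.lift _ (Rloc.toLocalRingAt p _) = _
    rw [h]
    exact (IsLocalization.lift_eq _ _).trans (g.commutes r)

lemma liftRloc_mul {q : Rloc k p} {S T : MvPolynomial (Fin 3) k}
    (hq : (q : FracF k) * toFrac k T = toFrac k S) : liftRloc g hg q * g T = g S := by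
  have h : Rloc.toLocalRingAt p q * algebraMap _ (localRingAt p) T =
      algebraMap _ (localRingAt p) S :=
    Subtype.ext hq
  have hlift (x : MvPolynomial (Fin 3) k) :
      IsLocalization.lift (M := nonvanishingAt p) (S := localRingAt p)
        (g := (g : MvPolynomial (Fin 3) k →+* Q)) (fun T => hg T (mem_nonvanishingAt.mp T.2))
        (algebraMap _ _ x) = g x :=
    IsLocalization.lift_eq _ x
  change IsLocalization.lift _ (Rloc.toLocalRingAt p q) * g T = g S
  rw [← hlift T, ← hlift S, ← map_mul, h]

end Lift

abbrev truncPoly (k : Type) [Field k] (e : ℕ) : Type :=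
  Polynomial k ⧸ Ideal.span {(Polynomial.X : Polynomial k) ^ e}

def truncRestrict (p w : Fin 3 → k) (e : ℕ) : MvPolynomial (Fin 3) k →ₐ[k] truncPoly k e :=
  (Ideal.Quotient.mkₐ k _).comp (lineRestrict p w)

lemma isUnit_truncRestrict {p w : Fin 3 → k} {e : ℕ} {T : MvPolynomial (Fin 3) k}
    (hT : eval p T ≠ 0) : IsUnit (truncRestrict p w e T) :=
  Polynomial.isUnit_mk_X_pow (f := lineRestrict p w T) (by rwa [lineRestrict_coeff_zero]) e

def localToTrunc (p w : Fin 3 → k) (e : ℕ) : Rloc k p →ₐ[k] truncPoly k e :=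
  liftRloc (truncRestrict p w e) fun _ => isUnit_truncRestrict

lemma localToTrunc_mul {p w : Fin 3 → k} {e : ℕ} {q : Rloc k p} {S T : MvPolynomial (Fin 3) k}
    (hq : (q : FracF k) * toFrac k T = toFrac k S) :
    localToTrunc p w e q * truncRestrict p w e T = truncRestrict p w e S :=
  liftRloc_mul _ _ hq

section LocalMultiplicity

variable {β : k} {p w : Fin 3 → k} {e : ℕ}

lemma localToTrunc_surjective (hc : IsLineChart β p w) :
    Function.Surjective (localToTrunc p w e) := by
  intro y
  obtain ⟨g, rfl⟩ := Ideal.Quotient.mk_surjective y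
  obtain ⟨G, hG, hGg⟩ := exists_isHomogeneous_lineRestrict_eq hc (le_refl g.natDegree)
  obtain ⟨T, hT, hT1⟩ := exists_isHomogeneous_lineRestrict_eq hc (g := 1) (n := g.natDegree)
    (by simp)
  have hTp : eval p T ≠ 0 := by simp [← lineRestrict_coeff_zero (w := w), hT1]
  have hT0 : toFrac k T ≠ 0 :=
    (map_ne_zero_iff _ (IsFractionRing.injective _ _)).mpr fun h => hTp (by simp [h])
  let q : Rloc k p := ⟨toFrac k G / toFrac k T, G, T, _, hG, hT, hTp, div_mul_cancel₀ _ hT0⟩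
  refine ⟨q, ?_⟩
  simpa [truncRestrict, hGg, hT1] using
    localToTrunc_mul (w := w) (e := e) (q := q) (div_mul_cancel₀ _ hT0)

/-- `S/T` in the kernel means `S(p + X • w) = X^e v`. With `B(p + X • w) = X^e u`, lifts `U, W`
of `u, v`, in degrees balancing `S U` and `W B`, make `S U - W B` vanish on the line, so
`S/T = (W B + N L)/(T U)` with `U(p) = u(0) ≠ 0`. -/
lemma ker_localToTrunc_le (hc : IsLineChart β p w) {B : MvPolynomial (Fin 3) k} {m : ℕ}
    (hB : B.IsHomogeneous m) {u : Polynomial k} (hBu : lineRestrict p w B = Polynomial.X ^ e * u)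
    (hu : u.coeff 0 ≠ 0) :
    RingHom.ker (localToTrunc p w e) ≤ interIdeal k p B (lineForm β) := by
  intro q hq
  obtain ⟨S, T, d, hS, hT, hTp, hqT⟩ := q.2
  have hS0 : truncRestrict p w e S = 0 := by
    rw [← localToTrunc_mul hqT, RingHom.mem_ker.mp hq, zero_mul]
  obtain ⟨v, hv⟩ : Polynomial.X ^ e ∣ lineRestrict p w S :=
    Ideal.mem_span_singleton.mp (Ideal.Quotient.eq_zero_iff_mem.mp hS0)
  set K := u.natDegree + v.natDegree
  obtain ⟨U, hU, hUu⟩ := exists_isHomogeneous_lineRestrict_eq hc (n := m + K) (g := u) (by omega)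
  obtain ⟨W, hW, hWv⟩ := exists_isHomogeneous_lineRestrict_eq hc (n := d + K) (g := v) (by omega)
  obtain ⟨N, hN⟩ : lineForm β ∣ S * U - W * B := by
    refine lineForm_dvd_of_lineRestrict_eq_zero hc ((hS.mul hU).sub ?_) ?_
    · exact (by omega : d + K + m = d + (m + K)) ▸ hW.mul hB
    · simp only [map_sub, map_mul, hv, hUu, hWv, hBu]
      ring
  have hSU : S * U = W * B + N * lineForm β := by linear_combination hN
  refine Ideal.subset_span ⟨W, N, T * U, _, hSU ▸ hS.mul hU, hT.mul hU, ?_, ?_⟩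
  · rw [map_mul, ← lineRestrict_coeff_zero (w := w) U, hUu]
    exact mul_ne_zero hTp hu
  · rw [← hSU, map_mul, map_mul, ← mul_assoc, hqT]

lemma interIdeal_le_ker_localToTrunc (hc : IsLineChart β p w) {B : MvPolynomial (Fin 3) k}
    (hBe : Polynomial.X ^ e ∣ lineRestrict p w B) :
    interIdeal k p B (lineForm β) ≤ RingHom.ker (localToTrunc p w e) := by
  rw [interIdeal, Ideal.span_le]
  rintro q ⟨M, N, T, d, -, -, hTp, hqT⟩
  have h := localToTrunc_mul (w := w) (e := e) hqT
  have h0 : truncRestrict p w e (M * B + N * lineForm β) = 0 := by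
    rw [truncRestrict, AlgHom.comp_apply, Ideal.Quotient.mkₐ_eq_mk,
      Ideal.Quotient.eq_zero_iff_mem, Ideal.mem_span_singleton, map_add, map_mul, map_mul,
      lineRestrict_lineForm hc, mul_zero, add_zero]
    exact dvd_mul_of_dvd_right hBe _
  rw [h0] at h
  exact (isUnit_truncRestrict hTp).mul_left_eq_zero.mp h

theorem interMult_eq_natTrailingDegree (hc : IsLineChart β p w) {B : MvPolynomial (Fin 3) k}
    {m : ℕ} (hB : B.IsHomogeneous m) (hLB : ¬ lineForm β ∣ B) :
    interMult k p B (lineForm β) = (lineRestrict p w B).natTrailingDegree := by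
  have hB0 : lineRestrict p w B ≠ 0 := fun h => hLB (lineForm_dvd_of_lineRestrict_eq_zero hc hB h)
  obtain ⟨u, hBu, hu⟩ := (lineRestrict p w B).exists_eq_pow_rootMultiplicity_mul_and_not_dvd hB0 0
  rw [Polynomial.rootMultiplicity_eq_natTrailingDegree', map_zero, sub_zero] at hBu
  rw [map_zero, sub_zero, Polynomial.X_dvd_iff] at hu
  have hker : RingHom.ker (localToTrunc p w _) = interIdeal k p B (lineForm β) :=
    le_antisymm (ker_localToTrunc_le hc hB hBu hu) (interIdeal_le_ker_localToTrunc hc ⟨u, hBu⟩)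
  have hiso := (Ideal.quotientEquivAlgOfEq k hker).symm.trans
    (Ideal.quotientKerAlgEquivOfSurjective (localToTrunc_surjective hc))
  rw [interMult, hiso.toLinearEquiv.finrank_eq]
  exact finrank_quotient_span_eq_natDegree.trans (Polynomial.natDegree_X_pow _)

lemma interMult_rep_mk (hc : IsLineChart β p w) (hp0 : p ≠ 0) {B : MvPolynomial (Fin 3) k}
    {m : ℕ} (hB : B.IsHomogeneous m) (hLB : ¬ lineForm β ∣ B) :
    interMult k (Projectivization.mk k p hp0).rep B (lineForm β) =
      (lineRestrict p w B).natTrailingDegree := by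
  obtain ⟨a, ha⟩ := Projectivization.exists_smul_eq_mk_rep k p hp0
  have hB0 : lineRestrict p w B ≠ 0 := fun h => hLB (lineForm_dvd_of_lineRestrict_eq_zero hc hB h)
  rw [← ha, Units.smul_def, interMult_eq_natTrailingDegree (hc.smul a.ne_zero) hB hLB,
    lineRestrict_smul hB, Polynomial.smul_eq_C_mul,
    Polynomial.natTrailingDegree_mul (by simp) hB0, Polynomial.natTrailingDegree_C, zero_add]

end LocalMultiplicity

lemma interMult_eq_zero_of_eval_lineForm_ne_zero {β : k} {p : Fin 3 → k}
    (hp : eval p (lineForm β) ≠ 0) (B : MvPolynomial (Fin 3) k) :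
    interMult k p B (lineForm β) = 0 := by
  have hL : (lineForm β).IsHomogeneous 1 :=
    (isHomogeneous_X _ _).sub ((isHomogeneous_X _ _).C_mul β)
  have htop : interIdeal k p B (lineForm β) = ⊤ := by
    refine (Ideal.eq_top_iff_one _).mpr (Ideal.subset_span ⟨0, 1, lineForm β, 1, ?_, hL, hp, ?_⟩)
    · simpa using hL
    · simp
  have : Subsingleton (Rloc k p ⧸ interIdeal k p B (lineForm β)) := by
    rw [htop]
    exact Ideal.Quotient.subsingleton_iff.mpr rfl
  exact Module.finrank_zero_of_subsingleton

lemma not_isUnit_lineForm (β : k) : ¬ IsUnit (lineForm β) := fun h => by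
  simpa using (h.map (eval (0 : Fin 3 → k))).ne_zero

section ProjectiveLine

variable (β : k)

def linePoint : Option k → Projectivization k (Fin 3 → k)
  | none => Projectivization.mk k ![1, 0, 0] fun h => by simpa using congrFun h 0
  | some t => Projectivization.mk k ![t, β, 1] fun h => by simpa using congrFun h 2

lemma linePoint_injective : Function.Injective (linePoint β) := by
  rintro (_ | s) (_ | t) h <;>
    obtain ⟨a, ha⟩ := (Projectivization.mk_eq_mk_iff _ _ _ _ _).mp h
  · rfl
  · simpa [Units.smul_def] using congrFun ha 2
  · simpa using congrFun ha 2
  · have ha2 : (a : k) = 1 := by simpa [Units.smul_def] using congrFun ha 2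
    simpa [Units.smul_def, ha2] using (congrFun ha 0).symm

lemma mem_range_linePoint {P : Projectivization k (Fin 3 → k)}
    (hP : eval P.rep (lineForm β) = 0) : P ∈ Set.range (linePoint β) := by
  have hp1 : P.rep 1 = β * P.rep 2 := by simpa [sub_eq_zero] using hP
  rw [← Projectivization.mk_rep P]
  by_cases hp2 : P.rep 2 = 0
  · have hp0 : P.rep 0 ≠ 0 := fun hp0 => P.rep_nonzero <| by
      ext i; fin_cases i <;> simp [hp0, hp1, hp2]
    refine ⟨none, (Projectivization.mk_eq_mk_iff' _ _ _ _ _).mpr ⟨(P.rep 0)⁻¹, ?_⟩⟩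
    ext i; fin_cases i <;> simp [hp0, hp1, hp2]
  · refine ⟨some (P.rep 0 / P.rep 2), (Projectivization.mk_eq_mk_iff' _ _ _ _ _).mpr
      ⟨(P.rep 2)⁻¹, ?_⟩⟩
    ext i; fin_cases i <;> simp [hp1, hp2, div_eq_inv_mul, mul_comm β]

end ProjectiveLine

theorem finsum_interMult_eq [IsAlgClosed k] {β : k} {B : MvPolynomial (Fin 3) k} {m : ℕ}
    (hB : B.IsHomogeneous m) (hcop : IsRelPrime B (lineForm β)) :
    ∑ᶠ P : Projectivization k (Fin 3 → k), interMult k P.rep B (lineForm β) = m := by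
  have hLB : ¬ lineForm β ∣ B := fun h => not_isUnit_lineForm β (hcop h dvd_rfl)
  have hc0 : IsLineChart β ![0, β, 1] ![1, 0, 0] := ⟨by simp, by simp, by simp⟩
  set f := lineRestrict ![0, β, 1] ![1, 0, 0] B
  have hf : f ≠ 0 := fun h => hLB (lineForm_dvd_of_lineRestrict_eq_zero hc0 hB h)
  have hfm : f.natDegree ≤ m := natDegree_lineRestrict_le hB
  have hinf : interMult k (linePoint β none).rep B (lineForm β) = m - f.natDegree := by
    rw [linePoint, interMult_rep_mk (w := ![0, β, 1]) ⟨by simp, by simp, by simp⟩ _ hB hLB,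
      lineRestrict_swap hB, Polynomial.natTrailingDegree_reflect hf hfm]
  have haff (t : k) :
      interMult k (linePoint β (some t)).rep B (lineForm β) = f.rootMultiplicity t := by
    rw [linePoint, interMult_rep_mk (w := ![1, 0, 0]) ⟨by simp, by simp, by simp⟩ _ hB hLB,
      show ![t, β, 1] = ![0, β, 1] + t • ![1, 0, 0] by ext i; fin_cases i <;> simp,
      lineRestrict_add_smul, ← Polynomial.rootMultiplicity_eq_natTrailingDegree]
  have hsupp : Function.support (fun P : Projectivization k (Fin 3 → k) =>
      interMult k P.rep B (lineForm β)) ⊆ Set.range (linePoint β) := fun P hP =>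
    mem_range_linePoint β (by_contra fun h => hP (interMult_eq_zero_of_eval_lineForm_ne_zero h B))
  rw [← finsum_mem_univ, ← finsum_mem_inter_support_eq _ (Set.range (linePoint β)) _
      (by rw [Set.univ_inter, Set.inter_eq_right.mpr hsupp]),
    finsum_mem_range (linePoint_injective β), finsum_option ?_, hinf]
  · simp_rw [haff]
    rw [Polynomial.finsum_rootMultiplicity]
    omega
  · refine f.roots.finite_toSet.subset fun t ht => ?_
    simpa [haff, and_comm] using ht

end

end LineIntersection

/-- A curve of degree `m` meets a line `y - βz` in exactly `m` points counted with
multiplicity. -/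
theorem stmt13 {K : Type} [Field K] (A : MvPolynomial (Fin 3) K) (m : ℕ)
    (hA : A.IsHomogeneous m) (β : AlgebraicClosure K)
    (hcop : IsRelPrime (MvPolynomial.map (algebraMap K (AlgebraicClosure K)) A)
      ((X 1 : MvPolynomial (Fin 3) (AlgebraicClosure K)) - C β * X 2)) :
    ∑ᶠ P : Projectivization (AlgebraicClosure K) (Fin 3 → AlgebraicClosure K),
      interMult (AlgebraicClosure K) P.rep
        (MvPolynomial.map (algebraMap K (AlgebraicClosure K)) A)
        ((X 1 : MvPolynomial (Fin 3) (AlgebraicClosure K)) - C β * X 2) = m :=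
  LineIntersection.finsum_interMult_eq (hA.map _) hcop
end

section
/- Two homogeneous polynomials A, B ∈ K[x,y,z] with no nonconstant common factor have only finitely many common zeros in the projective plane over the algebraic closure of K. -/
open MvPolynomial

/-!
Eliminate one variable at a time. Since `A` and `B` are coprime in `K[y,z][x]`, Gauss's lemma
makes them coprime in `K(y,z)[x]`, and clearing denominators in a Bézout identity there gives a
nonzero `c ∈ K[y,z]` in the ideal `(A, B)`. This ideal is homogeneous, so some nonzero homogeneous
component of `c` lies in it too. Doing this for each variable gives, for every pair of
coordinates, a nonzero binary form vanishing on that pair of coordinates of every common zero.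
A nonzero binary form `c` has only finitely many `t` with `c(t, 1) = 0`, so in each affine chart
the common zeros have only finitely many possible coordinates.
-/

open MvPolynomial

namespace Polynomial

open IsLocalization nonZeroDivisors

variable {R : Type*} [CommRing R] [IsDomain R] [IsGCDMonoid R]

theorem isCoprime_map_fraction_map_of_isRelPrime {K : Type*} [Field K] [Algebra R K]
    [IsFractionRing R K] {a b : R[X]} (h : IsRelPrime a b) :
    IsCoprime (a.map (algebraMap R K)) (b.map (algebraMap R K)) := by
  let := Classical.arbitrary (NormalizedGCDMonoid R)
  have hinj := map_injective _ (IsFractionRing.injective R K)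
  refine IsRelPrime.isCoprime fun d hda hdb => ?_
  rcases eq_or_ne d 0 with rfl | hd
  · rw [zero_dvd_iff, ← Polynomial.map_zero (algebraMap R K)] at hda hdb
    rw [hinj hda, hinj hdb] at h
    exact absurd h not_isRelPrime_zero_zero
  -- `d` is divisible by the image of a primitive `e`, and by Gauss's lemma `e` divides `a`, `b`.
  set e := (integerNormalization R⁰ d).primPart
  have he : e.map (algebraMap R K) ∣ d := by
    obtain ⟨s, hs, hsd⟩ := integerNormalization_spec R⁰ d
    have hunit : IsUnit (C (algebraMap R K s)) :=
      isUnit_C.mpr (IsFractionRing.to_map_ne_zero_of_mem_nonZeroDivisors hs).isUnit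
    rw [← hunit.dvd_mul_left, ← smul_eq_C_mul, algebraMap_smul, ← hsd]
    exact Polynomial.map_dvd _ (primPart_dvd _)
  have hprim := isPrimitive_primPart (integerNormalization R⁰ d)
  exact isUnit_or_eq_zero_of_isUnit_integerNormalization_primPart hd
    (h (hprim.dvd_of_fraction_map_dvd_fraction_map (he.trans hda))
      (hprim.dvd_of_fraction_map_dvd_fraction_map (he.trans hdb)))

theorem exists_C_mem_span_pair_of_isRelPrime {a b : R[X]} (h : IsRelPrime a b) :
    ∃ r ≠ 0, C r ∈ Ideal.span {a, b} := by
  let K := FractionRing R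
  obtain ⟨u, v, huv⟩ := isCoprime_map_fraction_map_of_isRelPrime (K := K) h
  obtain ⟨s, hs, hsu⟩ := integerNormalization_spec R⁰ u
  obtain ⟨t, ht, htv⟩ := integerNormalization_spec R⁰ v
  refine ⟨s * t, mul_ne_zero (nonZeroDivisors.ne_zero hs) (nonZeroDivisors.ne_zero ht),
    Ideal.mem_span_pair.mpr
      ⟨C t * integerNormalization R⁰ u, C s * integerNormalization R⁰ v, ?_⟩⟩
  apply map_injective _ (IsFractionRing.injective R K)
  simp only [Polynomial.map_add, Polynomial.map_mul, map_C, hsu, htv, Algebra.smul_def,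
    algebraMap_apply, map_mul]
  linear_combination (C (algebraMap R K s) * C (algebraMap R K t)) * huv

end Polynomial

namespace MvPolynomial

section Elimination

variable {R : Type*} [CommRing R] [IsDomain R] [UniqueFactorizationMonoid R]

theorem exists_ne_zero_rename_mem_span_pair_of_isRelPrime {σ τ : Type*} (e : Option σ ≃ τ)
    {A B : MvPolynomial τ R} (h : IsRelPrime A B) :
    ∃ c : MvPolynomial σ R, c ≠ 0 ∧ rename (e ∘ some) c ∈ Ideal.span {A, B} := by
  let φ := (renameEquiv R e).symm.trans (optionEquivLeft R σ)
  have hφ : IsRelPrime (φ A) (φ B) := .of_map φ.symm (by simpa using h)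
  obtain ⟨c, hc, hmem⟩ := Polynomial.exists_C_mem_span_pair_of_isRelPrime hφ
  refine ⟨c, hc, ?_⟩
  have := Ideal.mem_map_of_mem φ.symm hmem
  rw [Ideal.map_span, Set.image_pair, AlgEquiv.symm_apply_apply,
    AlgEquiv.symm_apply_apply] at this
  convert this using 1
  simp [φ, optionEquivLeft, rename_rename]

attribute [local instance] gradedAlgebra in
theorem exists_isHomogeneous_rename_succAbove_mem_span_pair {n p q : ℕ}
    {A B : MvPolynomial (Fin (n + 1)) R} (hA : A.IsHomogeneous p) (hB : B.IsHomogeneous q)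
    (h : IsRelPrime A B) (i : Fin (n + 1)) :
    ∃ (c : MvPolynomial (Fin n) R) (d : ℕ), c ≠ 0 ∧ c.IsHomogeneous d ∧
      rename i.succAbove c ∈ Ideal.span {A, B} := by
  obtain ⟨c, hc, hmem⟩ :=
    exists_ne_zero_rename_mem_span_pair_of_isRelPrime (finSuccEquiv' i).symm h
  rw [show (finSuccEquiv' i).symm ∘ some = i.succAbove from
    _root_.funext (finSuccEquiv'_symm_some i)] at hmem
  have hI : (Ideal.span {A, B}).IsHomogeneous (homogeneousSubmodule (Fin (n + 1)) R) := by
    refine Ideal.homogeneous_span _ _ ?_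
    rintro x (rfl | rfl)
    exacts [⟨p, hA⟩, ⟨q, hB⟩]
  obtain ⟨u, hu⟩ := ne_zero_iff.mp hc
  refine ⟨homogeneousComponent u.degree c, u.degree, ne_zero_iff.mpr ⟨u, ?_⟩,
    homogeneousComponent_isHomogeneous _ _, ?_⟩
  · rwa [coeff_homogeneousComponent, if_pos rfl]
  · rw [rename_homogeneousComponent]
    exact homogeneousComponent_mem_of_mem hI hmem _

end Elimination

theorem eval_map_eq_zero_of_mem_span_pair {R S σ : Type*} [CommRing R] [CommRing S]
    (φ : R →+* S) {A B p : MvPolynomial σ R} (hp : p ∈ Ideal.span {A, B}) {v : σ → S}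
    (hA : eval v (map φ A) = 0) (hB : eval v (map φ B) = 0) : eval v (map φ p) = 0 := by
  obtain ⟨M, N, rfl⟩ := Ideal.mem_span_pair.mp hp
  simp [hA, hB]

namespace IsHomogeneous

theorem eval_smul {R σ : Type*} [CommSemiring R] {φ : MvPolynomial σ R} {n : ℕ}
    (hφ : φ.IsHomogeneous n) (s : R) (x : σ → R) : eval (s • x) φ = s ^ n * eval x φ := by
  rw [eval_eq, eval_eq, Finset.mul_sum]
  refine Finset.sum_congr rfl fun u hu => ?_
  have hdeg : ∑ i ∈ u.support, u i = n := by
    simpa [Finsupp.weight_apply, Finsupp.sum] using hφ (mem_support_iff.mp hu)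
  simp only [Pi.smul_apply, smul_eq_mul, mul_pow, Finset.prod_mul_distrib,
    Finset.prod_pow_eq_pow_sum, hdeg]
  ring

theorem finite_setOf_eval_eq_zero {R : Type*} [CommRing R] [IsDomain R]
    {r : MvPolynomial (Fin 2) R} {d : ℕ} (hr : r.IsHomogeneous d) (hr0 : r ≠ 0) :
    {t : R | eval ![t, 1] r = 0}.Finite := by
  set p : Polynomial R := MvPolynomial.aeval ![Polynomial.X, 1] r
  have hp : p ≠ 0 := fun hp => hr0 <| by
    rw [← Polynomial.homogenize_eq_of_isHomogeneous (p := p) hr rfl, hp,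
      Polynomial.homogenize_zero]
  refine (Polynomial.finite_setOfPred_isRoot hp).subset fun t ht => ?_
  have hpt : (fun i : Fin 2 => Polynomial.aeval t (![Polynomial.X, 1] i : Polynomial R)) =
      ![t, 1] := by
    funext i
    fin_cases i <;> simp
  have : p.eval t = eval ![t, 1] r := by
    rw [← Polynomial.coe_aeval_eq_eval, comp_aeval_apply, hpt]
    rfl
  simpa [Polynomial.IsRoot, this] using ht

end IsHomogeneous

end MvPolynomial

theorem Projectivization.eq_mk_of_smul_eq_rep {K V : Type*} [DivisionRing K] [AddCommGroup V]
    [Module K V] {P : Projectivization K V} {w : V} (hw : w ≠ 0) {s : K} (h : s • w = P.rep) :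
    P = mk K w hw := by
  rw [← P.mk_rep]
  exact (mk_eq_mk_iff' K _ _ _ hw).mpr ⟨s, h⟩

theorem Projectivization.finite_setOf_rep_mem_of_binaryForms {F : Type*} [Field F]
    {V : Set (Fin 3 → F)} (hV : ∀ v ∈ V, ∀ s : F, s • v ∈ V)
    (hc : ∀ i : Fin 3, ∃ (c : MvPolynomial (Fin 2) F) (d : ℕ),
      c ≠ 0 ∧ c.IsHomogeneous d ∧ ∀ v ∈ V, eval (v ∘ i.succAbove) c = 0) :
    {P : Projectivization F (Fin 3 → F) | P.rep ∈ V}.Finite := by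
  choose c d hc0 hcd hcV using hc
  set Z : Fin 3 → Set F := fun i => {t | eval ![t, 1] (c i) = 0}
  have hZ (i : Fin 3) : (Z i).Finite := (hcd i).finite_setOf_eval_eq_zero (hc0 i)
  have hroot (v) (hv : v ∈ V) (i : Fin 3) (h : v (i.succAbove 1) ≠ 0) :
      v (i.succAbove 0) / v (i.succAbove 1) ∈ Z i := by
    show eval ![_, 1] (c i) = 0
    convert hcV i _ (hV v hv (v (i.succAbove 1))⁻¹) using 3
    funext l
    fin_cases l <;> simp [div_eq_inv_mul, inv_mul_cancel₀ h]
  -- Points with `v 2 ≠ 0` are `[a : b : 1]`, the others `[a : 1 : 0]` or `[1 : 0 : 0]`.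
  refine (((hZ 1).prod (hZ 0)).image fun ab : F × F => mk F ![ab.1, ab.2, 1]
    (fun h => one_ne_zero (congrFun h 2))).union ((((hZ 2).image fun a : F =>
    mk F ![a, 1, 0] (fun h => one_ne_zero (congrFun h 1)))).union
    (Set.finite_singleton (mk F ![1, 0, 0] (fun h => one_ne_zero (congrFun h 0)))))
    |>.subset ?_
  intro P (hP : P.rep ∈ V)
  generalize hv : P.rep = v at hP
  by_cases h2 : v 2 = 0
  · by_cases h1 : v 1 = 0
    · refine Or.inr (Or.inr (eq_mk_of_smul_eq_rep _ (s := v 0) ?_))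
      rw [hv]
      funext l
      fin_cases l <;> simp [h1, h2]
    · refine Or.inr (Or.inl ⟨v 0 / v 1, hroot v hP 2 h1, ?_⟩)
      refine (eq_mk_of_smul_eq_rep _ (s := v 1) ?_).symm
      rw [hv]
      funext l
      fin_cases l <;> simp [mul_div_cancel₀ _ h1, h2]
  · refine Or.inl ⟨(v 0 / v 2, v 1 / v 2), ⟨hroot v hP 1 h2, hroot v hP 0 h2⟩, ?_⟩
    refine (eq_mk_of_smul_eq_rep _ (s := v 2) ?_).symm
    rw [hv]
    funext l
    fin_cases l <;> simp [mul_div_cancel₀ _ h2]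

/-- Two homogeneous polynomials with no nonconstant common factor have only finitely many
common zeros in the projective plane over the algebraic closure. -/
theorem stmt14 {K : Type} [Field K] (A B : MvPolynomial (Fin 3) K) (m n : ℕ)
    (hA : A.IsHomogeneous m) (hB : B.IsHomogeneous n) (hcop : IsRelPrime A B) :
    {P : Projectivization (AlgebraicClosure K) (Fin 3 → AlgebraicClosure K) |
      eval P.rep (MvPolynomial.map (algebraMap K (AlgebraicClosure K)) A) = 0 ∧
      eval P.rep (MvPolynomial.map (algebraMap K (AlgebraicClosure K)) B) = 0}.Finite := by
  set φ := algebraMap K (AlgebraicClosure K)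
  refine Projectivization.finite_setOf_rep_mem_of_binaryForms
    (V := {v | eval v (map φ A) = 0 ∧ eval v (map φ B) = 0}) (fun v hv s => ?_) (fun i => ?_)
  · simp only [Set.mem_ofPred_eq, (hA.map φ).eval_smul, (hB.map φ).eval_smul, hv.1, hv.2,
      mul_zero, and_self]
  · obtain ⟨c, d, hc0, hcd, hmem⟩ :=
      exists_isHomogeneous_rename_succAbove_mem_span_pair hA hB hcop i
    refine ⟨map φ c, d, (map_injective φ φ.injective).ne_iff' (map_zero _) |>.mpr hc0,
      hcd.map φ, fun v hv => ?_⟩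
    simpa [map_rename, eval_rename] using eval_map_eq_zero_of_mem_span_pair φ hmem hv.1 hv.2
end
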